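/- arXiv:1807.04428 — 4 statements merged into one kernel-verified Lean document; each statement's English description precedes it below -/
import Mathlib

section
/- (Global sublinear convergence of greedy BCM.) Assume A ≠ 0, and let f* = sup_{σ ∈ M_r} f(σ). Let σ⁰ ∈ M_r and, for each k ≥ 0, let σ^{k+1} be obtained from σ^k by a greedy BCM step, i.e. σ^{k+1} = T_{i_k}(σ^k) where i_k maximizes ‖g_i(σ^k)‖ − ⟨σ_i^k, g_i(σ^k)⟩ over i. Then for every integer K ≥ 1, min_{0 ≤ k ≤ K−1} ‖grad f(σ^k)‖_F² ≤ 2 n ‖A‖₁ (f* − f(σ⁰)) / K. -/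
/-!
A BCM step at row `i` raises `f` by exactly `2 (‖g_i‖ − ⟨σ_i, g_i⟩)`, while each row contributes
`‖g_i‖² − ⟨σ_i, g_i⟩² ≤ 2 ‖A‖₁ (‖g_i‖ − ⟨σ_i, g_i⟩)` to the gradient norm. Choosing the row of
largest gain therefore raises `f` by at least `‖grad f‖² / (2 n ‖A‖₁)`; since `f ≤ f*`, the gradient
norms summed over `K` steps are at most `2 n ‖A‖₁ (f* − f(σ⁰))`, and the smallest is at most the average.
-/

open scoped BigOperators RealInnerProductSpace
open Finset Matrix

noncomputable section

/-- Points on the sphere live in Euclidean space `ℝ^r`. -/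
abbrev Pt (r : ℕ) := EuclideanSpace ℝ (Fin r)

/-- A configuration: `n` rows, each a vector in `ℝ^r`. -/
abbrev Conf (n r : ℕ) := Fin n → Pt r

/-- Membership in the manifold `M_r`: all rows are unit vectors. -/
def inM {n r : ℕ} (σ : Conf n r) : Prop := ∀ i, ‖σ i‖ = 1

/-- `g_i(σ) = ∑_{j ≠ i} A_{ij} σ_j`. -/
def gvec {n r : ℕ} (A : Matrix (Fin n) (Fin n) ℝ) (σ : Conf n r) (i : Fin n) : Pt r :=
  ∑ j ∈ univ.erase i, A i j • σ j

/-- The objective `f(σ) = ⟨A, σσᵀ⟩ = ∑_{i,j} A_{ij} ⟨σ_i, σ_j⟩`. -/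
def fval {n r : ℕ} (A : Matrix (Fin n) (Fin n) ℝ) (σ : Conf n r) : ℝ :=
  ∑ i, ∑ j, A i j * ⟪σ i, σ j⟫

/-- The BCM update `T_i(σ)`: replace row `i` by `g_i(σ)/‖g_i(σ)‖`
    (unchanged if `g_i(σ) = 0`). -/
def Tupd {n r : ℕ} (A : Matrix (Fin n) (Fin n) ℝ) (σ : Conf n r) (i : Fin n) : Conf n r :=
  letI := Classical.dec (gvec A σ i = 0)
  Function.update σ i (if gvec A σ i = 0 then σ i else ‖gvec A σ i‖⁻¹ • gvec A σ i)

/-- `‖A‖₁ = max_j ∑_i |A_{ij}|`. -/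
def Anorm1 {n : ℕ} (A : Matrix (Fin n) (Fin n) ℝ) : ℝ := ⨆ j, ∑ i, |A i j|

/-- `‖A‖_{1,1} = ∑_{i,j} |A_{ij}|`. -/
def Anorm11 {n : ℕ} (A : Matrix (Fin n) (Fin n) ℝ) : ℝ := ∑ i, ∑ j, |A i j|

/-- Squared Riemannian gradient norm
    `‖grad f(σ)‖_F² = 2 ∑_i (‖g_i‖² − ⟨σ_i, g_i⟩²)`. -/
def gradNormSq {n r : ℕ} (A : Matrix (Fin n) (Fin n) ℝ) (σ : Conf n r) : ℝ :=
  2 * ∑ i, (‖gvec A σ i‖ ^ 2 - ⟪σ i, gvec A σ i⟫ ^ 2)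

/-- The geodesic through `σ` in direction `u`, at time `t`:
    `σ_i(t) = σ_i cos(‖u_i‖ t) + (u_i/‖u_i‖) sin(‖u_i‖ t)` (rows with `u_i = 0` stay fixed). -/
def geo {n r : ℕ} (σ u : Conf n r) (t : ℝ) : Conf n r :=
  fun i => Real.cos (‖u i‖ * t) • σ i + (Real.sin (‖u i‖ * t) / ‖u i‖) • u i

/-- Tangency: `u ∈ T_σ M_r` iff every row of `u` is orthogonal to the
    corresponding row of `σ`. -/
def tangent {n r : ℕ} (σ u : Conf n r) : Prop := ∀ i, ⟪u i, σ i⟫ = 0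

/-- Squared Frobenius norm `‖u‖_F² = ∑_i ‖u_i‖²`. -/
def fnormSq {n r : ℕ} (u : Conf n r) : ℝ := ∑ i, ‖u i‖ ^ 2

/-- Riemannian gradient pairing `G_σ(u) = 2 ∑_i ⟨u_i, g_i(σ)⟩`. -/
def Gform {n r : ℕ} (A : Matrix (Fin n) (Fin n) ℝ) (σ u : Conf n r) : ℝ :=
  2 * ∑ i, ⟪u i, gvec A σ i⟫

/-- Riemannian Hessian quadratic form
    `H_σ(u) = 2 ∑_i (⟨u_i, v_i⟩ − ‖u_i‖² ⟨σ_i, g_i(σ)⟩)` with `v_i = ∑_{j≠i} A_{ij} u_j`. -/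
def Hform {n r : ℕ} (A : Matrix (Fin n) (Fin n) ℝ) (σ u : Conf n r) : ℝ :=
  2 * ∑ i, (⟪u i, gvec A u i⟫ - ‖u i‖ ^ 2 * ⟪σ i, gvec A σ i⟫)

/-- Stationary point: `g_i(σ) ≠ 0` and `σ_i = g_i(σ)/‖g_i(σ)‖` for all `i`. -/
def stationary {n r : ℕ} (A : Matrix (Fin n) (Fin n) ℝ) (σ : Conf n r) : Prop :=
  ∀ i, gvec A σ i ≠ 0 ∧ σ i = ‖gvec A σ i‖⁻¹ • gvec A σ i

/-- `w ∈ V_σ = {σB : Bᵀ = −B}` (rows of `σB` given by `(σB)_{ik} = ∑_l σ_{il} B_{lk}`). -/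
def inV {n r : ℕ} (σ w : Conf n r) : Prop :=
  ∃ B : Matrix (Fin r) (Fin r) ℝ, Bᵀ = -B ∧ ∀ i k, w i k = ∑ l, σ i l * B l k

/-- Frobenius-orthogonality of `u` to the subspace `V_σ`. -/
def perpV {n r : ℕ} (σ u : Conf n r) : Prop :=
  ∀ w : Conf n r, inV σ w → ∑ i, ⟪u i, w i⟫ = 0

/-- `f` satisfies quadratic decay at `σ` with constant `μ`:
    `H_σ(u) ≤ −μ ‖u‖_F²` for all tangent `u` Frobenius-orthogonal to `V_σ`. -/
def quadDecay {n r : ℕ} (A : Matrix (Fin n) (Fin n) ℝ) (σ : Conf n r) (μ : ℝ) : Prop :=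
  ∀ u : Conf n r, tangent σ u → perpV σ u → Hform A σ u ≤ -μ * fnormSq u

/-- Geodesic distance `dist(σ, σ') = (∑_i arccos⟨σ_i, σ'_i⟩²)^{1/2}`. -/
def gdist {n r : ℕ} (σ σ' : Conf n r) : ℝ :=
  Real.sqrt (∑ i, Real.arccos ⟪σ i, σ' i⟫ ^ 2)

/-- Right-multiplication of a configuration by a matrix `Q ∈ ℝ^{r×r}` (rowwise). -/
def rowMulQ {n r : ℕ} (σ : Conf n r) (Q : Matrix (Fin r) (Fin r) ℝ) : Conf n r :=
  fun i => (EuclideanSpace.equiv (Fin r) ℝ).symm (fun k => ∑ l, σ i l * Q l k)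

/-- Distance to the equivalence class `[σ'] = {σ'Q : Q ∈ O(r)}`. -/
def distClass {n r : ℕ} (σ σ' : Conf n r) : ℝ :=
  ⨅ Q : {Q : Matrix (Fin r) (Fin r) ℝ // Qᵀ * Q = 1}, gdist σ (rowMulQ σ' Q.1)

/-- `f* = sup_{σ ∈ M_r} f(σ)`. -/
def fstar {n r : ℕ} (A : Matrix (Fin n) (Fin n) ℝ) : ℝ :=
  sSup (fval A '' {σ : Conf n r | inM σ})

/-- The optimal value of the SDP with unit-diagonal constraints. -/
def SDPval {n : ℕ} (A : Matrix (Fin n) (Fin n) ℝ) : ℝ :=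
  sSup {y | ∃ X : Matrix (Fin n) (Fin n) ℝ, X.PosSemidef ∧ (∀ i, X i i = 1) ∧
    y = ∑ i, ∑ j, A i j * X i j}

/-- BCM iterates along a sequence of coordinates `ω`. -/
def iterSeq {n r : ℕ} (A : Matrix (Fin n) (Fin n) ℝ) (σ0 : Conf n r) (ω : ℕ → Fin n) :
    ℕ → Conf n r
  | 0 => σ0
  | k + 1 => Tupd A (iterSeq A σ0 ω k) (ω k)

/-- The set of rows where `u` is nonzero. -/
def suppu {n r : ℕ} (u : Conf n r) : Finset (Fin n) :=
  letI := Classical.decPred (fun i : Fin n => u i ≠ 0)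
  Finset.univ.filter (fun i : Fin n => u i ≠ 0)



section BCM

variable {n r : ℕ}

def bcmGain (A : Matrix (Fin n) (Fin n) ℝ) (σ : Conf n r) (i : Fin n) : ℝ :=
  ‖gvec A σ i‖ - ⟪σ i, gvec A σ i⟫

lemma inner_gvec (A : Matrix (Fin n) (Fin n) ℝ) (σ : Conf n r) (x : Pt r) (i : Fin n) :
    ⟪x, gvec A σ i⟫ = ∑ j ∈ univ.erase i, A i j * ⟪x, σ j⟫ := by
  simp only [gvec, inner_sum, real_inner_smul_right]

lemma fval_eq_sum_erase_add (A : Matrix (Fin n) (Fin n) ℝ) (hA : A.IsSymm)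
    (hdiag : ∀ i, A i i = 0) (σ : Conf n r) (i : Fin n) :
    fval A σ = (∑ j ∈ univ.erase i, ∑ k ∈ univ.erase i, A j k * ⟪σ j, σ k⟫)
      + 2 * ⟪σ i, gvec A σ i⟫ := by
  have split_row : fval A σ = (∑ j ∈ univ.erase i, ∑ k, A j k * ⟪σ j, σ k⟫)
      + ∑ k, A i k * ⟪σ i, σ k⟫ := (sum_erase_add univ _ (mem_univ i)).symm
  have split_col : ∀ j : Fin n, (∑ k, A j k * ⟪σ j, σ k⟫)
      = (∑ k ∈ univ.erase i, A j k * ⟪σ j, σ k⟫) + A j i * ⟪σ j, σ i⟫ :=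
    fun j => (sum_erase_add univ _ (mem_univ i)).symm
  have col_eq_row : ∑ j ∈ univ.erase i, A j i * ⟪σ j, σ i⟫ = ⟪σ i, gvec A σ i⟫ := by
    rw [inner_gvec]
    refine sum_congr rfl fun j _ => ?_
    rw [hA.apply i j, real_inner_comm]
  rw [split_row, split_col i, hdiag, sum_congr rfl (fun j _ => split_col j), sum_add_distrib,
    col_eq_row, inner_gvec]
  ring

lemma Tupd_apply_of_ne (A : Matrix (Fin n) (Fin n) ℝ) (σ : Conf n r) {i j : Fin n}
    (h : j ≠ i) : Tupd A σ i j = σ j :=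
  Function.update_of_ne h _ _

lemma gvec_Tupd_self (A : Matrix (Fin n) (Fin n) ℝ) (σ : Conf n r) (i : Fin n) :
    gvec A (Tupd A σ i) i = gvec A σ i :=
  sum_congr rfl fun _ hj => by rw [Tupd_apply_of_ne A σ (ne_of_mem_erase hj)]

lemma inner_Tupd_self_gvec (A : Matrix (Fin n) (Fin n) ℝ) (σ : Conf n r) (i : Fin n) :
    ⟪Tupd A σ i i, gvec A σ i⟫ = ‖gvec A σ i‖ := by
  rw [Tupd, Function.update_self]
  split_ifs with h
  · simp [h]
  · rw [real_inner_smul_left, real_inner_self_eq_norm_sq, sq, ← mul_assoc,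
      inv_mul_cancel₀ (norm_ne_zero_iff.mpr h), one_mul]

lemma inM_Tupd (A : Matrix (Fin n) (Fin n) ℝ) {σ : Conf n r} (hσ : inM σ) (i : Fin n) :
    inM (Tupd A σ i) := by
  intro j
  rcases eq_or_ne j i with rfl | hj
  · rw [Tupd, Function.update_self]
    split_ifs with h
    · exact hσ j
    · rw [norm_smul, norm_inv, norm_norm, inv_mul_cancel₀ (norm_ne_zero_iff.mpr h)]
  · rw [Tupd_apply_of_ne A σ hj]
    exact hσ j

/-- Only the terms of `f` involving row `i` change, and they change by twice the gain. -/
lemma fval_Tupd (A : Matrix (Fin n) (Fin n) ℝ) (hA : A.IsSymm) (hdiag : ∀ i, A i i = 0)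
    (σ : Conf n r) (i : Fin n) :
    fval A (Tupd A σ i) = fval A σ + 2 * bcmGain A σ i := by
  have rest_eq : ∑ j ∈ univ.erase i, ∑ k ∈ univ.erase i, A j k * ⟪Tupd A σ i j, Tupd A σ i k⟫
      = ∑ j ∈ univ.erase i, ∑ k ∈ univ.erase i, A j k * ⟪σ j, σ k⟫ :=
    sum_congr rfl fun _ hj => sum_congr rfl fun _ hk => by
      rw [Tupd_apply_of_ne A σ (ne_of_mem_erase hj), Tupd_apply_of_ne A σ (ne_of_mem_erase hk)]
  rw [fval_eq_sum_erase_add A hA hdiag (Tupd A σ i) i, rest_eq, gvec_Tupd_self,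
    inner_Tupd_self_gvec, fval_eq_sum_erase_add A hA hdiag σ i, bcmGain]
  ring

lemma Anorm1_nonneg (A : Matrix (Fin n) (Fin n) ℝ) : 0 ≤ Anorm1 A :=
  Real.iSup_nonneg fun _ => sum_nonneg fun _ _ => abs_nonneg _

lemma norm_gvec_le_Anorm1 (A : Matrix (Fin n) (Fin n) ℝ) (hA : A.IsSymm) {σ : Conf n r}
    (hσ : inM σ) (i : Fin n) : ‖gvec A σ i‖ ≤ Anorm1 A :=
  calc ‖gvec A σ i‖ ≤ ∑ j ∈ univ.erase i, ‖A i j • σ j‖ := norm_sum_le _ _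
    _ = ∑ j ∈ univ.erase i, |A j i| := sum_congr rfl fun j _ => by
        rw [norm_smul, hσ j, Real.norm_eq_abs, mul_one, hA.apply i j]
    _ ≤ ∑ j, |A j i| := sum_le_sum_of_subset_of_nonneg (erase_subset _ _)
        fun _ _ _ => abs_nonneg _
    _ ≤ Anorm1 A := le_ciSup (f := fun i => ∑ j, |A j i|) (Set.finite_range _).bddAbove i

lemma fval_le_Anorm11 (A : Matrix (Fin n) (Fin n) ℝ) {σ : Conf n r} (hσ : inM σ) :
    fval A σ ≤ Anorm11 A := by
  refine sum_le_sum fun i _ => sum_le_sum fun j _ => ?_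
  have hinner : |⟪σ i, σ j⟫| ≤ 1 := by
    simpa [hσ i, hσ j] using abs_real_inner_le_norm (σ i) (σ j)
  calc A i j * ⟪σ i, σ j⟫ ≤ |A i j| * |⟪σ i, σ j⟫| := (le_abs_self _).trans (abs_mul _ _).le
    _ ≤ |A i j| := mul_le_of_le_one_right (abs_nonneg _) hinner

lemma fval_le_fstar (A : Matrix (Fin n) (Fin n) ℝ) {σ : Conf n r} (hσ : inM σ) :
    fval A σ ≤ fstar (r := r) A :=
  le_csSup ⟨Anorm11 A, by rintro _ ⟨τ, hτ, rfl⟩; exact fval_le_Anorm11 A hτ⟩ ⟨σ, hσ, rfl⟩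

lemma gradNormSq_le_four_mul_sum_bcmGain (A : Matrix (Fin n) (Fin n) ℝ) (hA : A.IsSymm)
    {σ : Conf n r} (hσ : inM σ) : gradNormSq A σ ≤ 4 * Anorm1 A * ∑ i, bcmGain A σ i := by
  have row_le : ∀ i, ‖gvec A σ i‖ ^ 2 - ⟪σ i, gvec A σ i⟫ ^ 2 ≤ 2 * Anorm1 A * bcmGain A σ i := by
    intro i
    have hinner := abs_le.mp <| by
      simpa [hσ i] using abs_real_inner_le_norm (σ i) (gvec A σ i)
    have hnorm := norm_gvec_le_Anorm1 A hA hσ i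
    -- `a² − b² = (a − b)(a + b)` with `|b| ≤ a ≤ ‖A‖₁`
    rw [bcmGain]
    nlinarith [hinner.1, hinner.2]
  calc gradNormSq A σ ≤ 2 * ∑ i, 2 * Anorm1 A * bcmGain A σ i := by
        rw [gradNormSq]
        gcongr with i
        exact row_le i
    _ = 4 * Anorm1 A * ∑ i, bcmGain A σ i := by
        rw [← mul_sum]
        ring

lemma gradNormSq_le_of_forall_bcmGain_le (A : Matrix (Fin n) (Fin n) ℝ) (hA : A.IsSymm)
    (hdiag : ∀ i, A i i = 0) {σ : Conf n r} (hσ : inM σ) {i : Fin n}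
    (hi : ∀ j, bcmGain A σ j ≤ bcmGain A σ i) :
    gradNormSq A σ ≤ 2 * n * Anorm1 A * (fval A (Tupd A σ i) - fval A σ) := by
  have hsum : ∑ j, bcmGain A σ j ≤ n * bcmGain A σ i := by
    simpa using sum_le_card_nsmul univ _ _ fun j _ => hi j
  calc gradNormSq A σ ≤ 4 * Anorm1 A * ∑ j, bcmGain A σ j :=
        gradNormSq_le_four_mul_sum_bcmGain A hA hσ
    _ ≤ 4 * Anorm1 A * (n * bcmGain A σ i) :=
        mul_le_mul_of_nonneg_left hsum (by linarith [Anorm1_nonneg A])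
    _ = 2 * n * Anorm1 A * (fval A (Tupd A σ i) - fval A σ) := by
        rw [fval_Tupd A hA hdiag]
        ring

end BCM

lemma exists_lt_le_div_of_le_mul_sub {a F : ℕ → ℝ} {c M : ℝ} (hc : 0 ≤ c)
    (ha : ∀ k, a k ≤ c * (F (k + 1) - F k)) (hF : ∀ k, F k ≤ M) {K : ℕ} (hK : 1 ≤ K) :
    ∃ k < K, a k ≤ c * (M - F 0) / K := by
  have hsum : ∑ k ∈ range K, a k ≤ ∑ _k ∈ range K, c * (M - F 0) / K :=
    calc ∑ k ∈ range K, a k ≤ ∑ k ∈ range K, c * (F (k + 1) - F k) := sum_le_sum fun k _ => ha k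
      _ = c * (F K - F 0) := by rw [← mul_sum, sum_range_sub]
      _ ≤ c * (M - F 0) := by gcongr; exact hF K
      _ = ∑ _k ∈ range K, c * (M - F 0) / K := by
        rw [sum_const, card_range, nsmul_eq_mul]
        field_simp [show (K : ℝ) ≠ 0 by positivity]
  obtain ⟨k, hk, hle⟩ := exists_le_of_sum_le (nonempty_range_iff.mpr (by omega)) hsum
  exact ⟨k, mem_range.mp hk, hle⟩

theorem greedy_bcm_sublinear_general {n r : ℕ}
    (A : Matrix (Fin n) (Fin n) ℝ) (hA : A.IsSymm) (hdiag : ∀ i, A i i = 0)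
    (σseq : ℕ → Conf n r) (hσ0 : inM (σseq 0))
    (hstep : ∀ k : ℕ, ∃ i : Fin n,
      (∀ j, ‖gvec A (σseq k) j‖ - ⟪σseq k j, gvec A (σseq k) j⟫ ≤
        ‖gvec A (σseq k) i‖ - ⟪σseq k i, gvec A (σseq k) i⟫) ∧
      σseq (k + 1) = Tupd A (σseq k) i)
    (K : ℕ) (hK : 1 ≤ K) :
    ∃ k < K, gradNormSq A (σseq k) ≤
      2 * n * Anorm1 A * (fstar (r := r) A - fval A (σseq 0)) / K := by
  have hM : ∀ k, inM (σseq k) := by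
    intro k
    induction k with
    | zero => exact hσ0
    | succ k ih =>
      obtain ⟨i, -, hnext⟩ := hstep k
      exact hnext ▸ inM_Tupd A ih i
  refine exists_lt_le_div_of_le_mul_sub (by positivity [Anorm1_nonneg A]) (fun k => ?_)
    (fun k => fval_le_fstar A (hM k)) hK
  obtain ⟨i, hi, hnext⟩ := hstep k
  rw [hnext]
  exact gradNormSq_le_of_forall_bcmGain_le A hA hdiag (hM k) hi

/-- global sublinear convergence of greedy BCM. -/
theorem greedy_bcm_sublinear {n r : ℕ} (hn : 0 < n) (hr : 0 < r)
    (A : Matrix (Fin n) (Fin n) ℝ) (hA : A.IsSymm) (hdiag : ∀ i, A i i = 0) (hA0 : A ≠ 0)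
    (σseq : ℕ → Conf n r) (hσ0 : inM (σseq 0))
    (hstep : ∀ k : ℕ, ∃ i : Fin n,
      (∀ j, ‖gvec A (σseq k) j‖ - ⟪σseq k j, gvec A (σseq k) j⟫ ≤
        ‖gvec A (σseq k) i‖ - ⟪σseq k i, gvec A (σseq k) i⟫) ∧
      σseq (k + 1) = Tupd A (σseq k) i)
    (K : ℕ) (hK : 1 ≤ K) :
    ∃ k < K, gradNormSq A (σseq k) ≤
      2 * n * Anorm1 A * (fstar (r := r) A - fval A (σseq 0)) / K :=
  greedy_bcm_sublinear_general A hA hdiag σseq hσ0 hstep K hK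
end
end

section
/- (Global sublinear convergence of BCM with uniform sampling, expectation over coordinate sequences.) Assume A ≠ 0 and let f* = sup_{σ ∈ M_r} f(σ). Fix σ⁰ ∈ M_r and an integer K ≥ 1. For each sequence of indices ω = (i_0,…,i_{K−1}) ∈ {1,…,n}^K define iterates σ^0(ω) = σ⁰ and σ^{k+1}(ω) = T_{i_k}(σ^k(ω)) for 0 ≤ k < K. Then min_{0 ≤ k ≤ K−1} [ n^{−K} Σ_{ω ∈ {1,…,n}^K} ‖grad f(σ^k(ω))‖_F² ] ≤ 2 n ‖A‖₁ (f* − f(σ⁰)) / K. -/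
open scoped BigOperators RealInnerProductSpace
open Finset Matrix

noncomputable section

/-!
A BCM step at row `i` raises `f` by exactly `2 (‖g_i‖ - ⟨σ_i, g_i⟩)`. Since `σ_i` is a unit
vector and `‖g_i‖ ≤ ‖A‖₁`, the `i`-th term of the gradient norm factors as
`(‖g_i‖ - ⟨σ_i, g_i⟩)(‖g_i‖ + ⟨σ_i, g_i⟩) ≤ 2 ‖A‖₁ (‖g_i‖ - ⟨σ_i, g_i⟩)`, so
`‖grad f(σ)‖² ≤ 2 ‖A‖₁ ∑_i (f(T_i σ) - f(σ))`. The iterate `σ^k(ω)` does not depend on `i_k`,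
so summing over `ω` turns the sum over rows into `n` times the total increase
`∑_ω (f(σ^{k+1}(ω)) - f(σ^k(ω)))`. Telescoping in `k` bounds the sum of the `K` averaged
gradient norms by `2 n ‖A‖₁ (f* - f(σ⁰))`, and the smallest of them is at most their mean.
-/

open Function

namespace BCM

variable {n r : ℕ}

section RowUpdate

variable (A : Matrix (Fin n) (Fin n) ℝ)

lemma gvec_update_self (σ : Conf n r) (i : Fin n) (x : Pt r) :
    gvec A (update σ i x) i = gvec A σ i :=
  sum_congr rfl fun _ hj => by rw [update_of_ne (ne_of_mem_erase hj)]

lemma inner_gvec (σ : Conf n r) (i : Fin n) (x : Pt r) :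
    ⟪x, gvec A σ i⟫ = ∑ q ∈ univ.erase i, A i q * ⟪x, σ q⟫ := by
  rw [gvec, inner_sum]
  exact sum_congr rfl fun q _ => real_inner_smul_right _ _ _

variable {A}

lemma fval_eq_sum_erase_add (hA : A.IsSymm) (hdiag : ∀ i, A i i = 0) (σ : Conf n r)
    (i : Fin n) :
    fval A σ = (∑ p ∈ univ.erase i, ∑ q ∈ univ.erase i, A p q * ⟪σ p, σ q⟫)
      + 2 * ⟪σ i, gvec A σ i⟫ := by
  have row_i : ∑ q ∈ univ.erase i, A i q * ⟪σ i, σ q⟫ = ⟪σ i, gvec A σ i⟫ :=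
    (inner_gvec A σ i (σ i)).symm
  have col_i : ∑ p ∈ univ.erase i, A p i * ⟪σ p, σ i⟫ = ⟪σ i, gvec A σ i⟫ := by
    rw [inner_gvec]
    exact sum_congr rfl fun p _ => by rw [hA.apply p i, real_inner_comm]
  simp only [fval, ← add_sum_erase univ _ (mem_univ i), sum_add_distrib, row_i, col_i,
    hdiag i]
  ring

lemma fval_update (hA : A.IsSymm) (hdiag : ∀ i, A i i = 0) (σ : Conf n r) (i : Fin n)
    (x : Pt r) :
    fval A (update σ i x) = fval A σ + 2 * (⟪x, gvec A σ i⟫ - ⟪σ i, gvec A σ i⟫) := by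
  have off_i : ∀ p ∈ univ.erase i, ∀ q ∈ univ.erase i,
      A p q * ⟪update σ i x p, update σ i x q⟫ = A p q * ⟪σ p, σ q⟫ := by
    intro p hp q hq
    rw [update_of_ne (ne_of_mem_erase hp), update_of_ne (ne_of_mem_erase hq)]
  rw [fval_eq_sum_erase_add hA hdiag _ i, fval_eq_sum_erase_add hA hdiag σ i,
    sum_congr rfl fun p hp => sum_congr rfl (off_i p hp), gvec_update_self, update_self]
  ring

lemma fval_Tupd (hA : A.IsSymm) (hdiag : ∀ i, A i i = 0) (σ : Conf n r) (i : Fin n) :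
    fval A (Tupd A σ i) = fval A σ + 2 * (‖gvec A σ i‖ - ⟪σ i, gvec A σ i⟫) := by
  rw [Tupd]
  split_ifs with h
  · simp [h]
  · rw [fval_update hA hdiag, real_inner_smul_left, real_inner_self_eq_norm_sq]
    field_simp [norm_ne_zero_iff.mpr h]

lemma inM_Tupd {σ : Conf n r} (hσ : inM σ) (i : Fin n) : inM (Tupd A σ i) := by
  intro j
  rw [Tupd]
  rcases eq_or_ne j i with rfl | hj
  · rw [update_self]
    split_ifs with h
    · exact hσ j
    · rw [norm_smul, norm_inv, norm_norm, inv_mul_cancel₀ (norm_ne_zero_iff.mpr h)]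
  · rw [update_of_ne hj]
    exact hσ j

lemma inM_iterSeq {σ0 : Conf n r} (hσ0 : inM σ0) (ω : ℕ → Fin n) (k : ℕ) :
    inM (iterSeq A σ0 ω k) := by
  induction k with
  | zero => exact hσ0
  | succ k ih => exact inM_Tupd ih (ω k)

end RowUpdate

section Bounds

variable {A : Matrix (Fin n) (Fin n) ℝ}

lemma Anorm1_nonneg (A : Matrix (Fin n) (Fin n) ℝ) : 0 ≤ Anorm1 A :=
  Real.iSup_nonneg fun _ => sum_nonneg fun _ _ => abs_nonneg _

lemma norm_gvec_le_Anorm1 (hA : A.IsSymm) {σ : Conf n r} (hσ : inM σ) (i : Fin n) :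
    ‖gvec A σ i‖ ≤ Anorm1 A :=
  calc ‖gvec A σ i‖ ≤ ∑ j ∈ univ.erase i, ‖A i j • σ j‖ := norm_sum_le _ _
    _ = ∑ j ∈ univ.erase i, |A i j| :=
        sum_congr rfl fun j _ => by rw [norm_smul, hσ j, Real.norm_eq_abs, mul_one]
    _ ≤ ∑ j, |A i j| := sum_le_sum_of_subset_of_nonneg (erase_subset i univ)
        fun _ _ _ => abs_nonneg _
    _ = ∑ j, |A j i| := sum_congr rfl fun j _ => by rw [hA.apply i j]
    _ ≤ Anorm1 A := le_ciSup (f := fun j => ∑ i, |A i j|) (Finite.bddAbove_range _) i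

lemma norm_sq_sub_inner_sq_le {E : Type*} [NormedAddCommGroup E] [InnerProductSpace ℝ E]
    {x g : E} (hx : ‖x‖ = 1) {c : ℝ} (hg : ‖g‖ ≤ c) :
    ‖g‖ ^ 2 - ⟪x, g⟫ ^ 2 ≤ 2 * c * (‖g‖ - ⟪x, g⟫) := by
  have hcs : |⟪x, g⟫| ≤ ‖g‖ := by simpa [hx] using abs_real_inner_le_norm x g
  have hle : ⟪x, g⟫ ≤ ‖g‖ := (le_abs_self _).trans hcs
  have hsum : ‖g‖ + ⟪x, g⟫ ≤ 2 * c := by linarith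
  calc ‖g‖ ^ 2 - ⟪x, g⟫ ^ 2 = (‖g‖ - ⟪x, g⟫) * (‖g‖ + ⟪x, g⟫) := by ring
    _ ≤ (‖g‖ - ⟪x, g⟫) * (2 * c) := mul_le_mul_of_nonneg_left hsum (by linarith)
    _ = 2 * c * (‖g‖ - ⟪x, g⟫) := mul_comm _ _

lemma gradNormSq_le_sum_fval_Tupd_sub (hA : A.IsSymm) (hdiag : ∀ i, A i i = 0)
    {σ : Conf n r} (hσ : inM σ) :
    gradNormSq A σ ≤ 2 * Anorm1 A * ∑ i, (fval A (Tupd A σ i) - fval A σ) := by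
  calc gradNormSq A σ
      ≤ 2 * ∑ i, 2 * Anorm1 A * (‖gvec A σ i‖ - ⟪σ i, gvec A σ i⟫) :=
        mul_le_mul_of_nonneg_left (sum_le_sum fun i _ =>
          norm_sq_sub_inner_sq_le (hσ i) (norm_gvec_le_Anorm1 hA hσ i)) zero_le_two
    _ = 2 * Anorm1 A * ∑ i, (fval A (Tupd A σ i) - fval A σ) := by
        simp only [fval_Tupd hA hdiag, add_sub_cancel_left, mul_sum]
        ring_nf

lemma fval_le_Anorm11 {σ : Conf n r} (hσ : inM σ) : fval A σ ≤ Anorm11 A := by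
  refine sum_le_sum fun i _ => sum_le_sum fun j _ => ?_
  have hcs : |⟪σ i, σ j⟫| ≤ 1 := by simpa [hσ i, hσ j] using abs_real_inner_le_norm (σ i) (σ j)
  calc A i j * ⟪σ i, σ j⟫ ≤ |A i j| * |⟪σ i, σ j⟫| := (le_abs_self _).trans (abs_mul _ _).le
    _ ≤ |A i j| := mul_le_of_le_one_right (abs_nonneg _) hcs

lemma fval_le_fstar {σ : Conf n r} (hσ : inM σ) : fval A σ ≤ fstar (r := r) A :=
  le_csSup ⟨Anorm11 A, by rintro _ ⟨τ, hτ, rfl⟩; exact fval_le_Anorm11 hτ⟩ ⟨σ, hσ, rfl⟩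

end Bounds

lemma exists_lt_le_div_of_sum_range_le {K : ℕ} (hK : 0 < K) {a : ℕ → ℝ} {C : ℝ}
    (h : ∑ k ∈ range K, a k ≤ C) : ∃ k < K, a k ≤ C / K := by
  have hsum : ∑ k ∈ range K, a k ≤ ∑ _k ∈ range K, C / K := by
    rw [sum_const, card_range, nsmul_eq_mul, mul_div_cancel₀ C (by positivity)]
    exact h
  obtain ⟨k, hk, hle⟩ := exists_le_of_sum_le (nonempty_range_iff.mpr hK.ne') hsum
  exact ⟨k, mem_range.mp hk, hle⟩

section Averaging

lemma sum_sum_eq_card_nsmul_sum_apply {ι α M : Type*} [Fintype ι] [DecidableEq ι] [Fintype α]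
    [AddCommMonoid M] (k : ι) (F : (ι → α) → α → M) (hF : ∀ ω a, F (update ω k a) = F ω) :
    ∑ ω, ∑ a, F ω a = Fintype.card α • ∑ ω, F ω (ω k) := by
  let e : Equiv.Perm ((ι → α) × α) :=
    Involutive.toPerm (fun p => (update p.1 k p.2, p.1 k)) fun p => by simp
  calc ∑ ω, ∑ a, F ω a = ∑ p : (ι → α) × α, F (e p).1 ((e p).1 k) := by
        rw [← Fintype.sum_prod_type']
        refine sum_congr rfl fun p _ => ?_
        show F p.1 p.2 = F (update p.1 k p.2) (update p.1 k p.2 k)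
        rw [hF, update_self]
    _ = ∑ p : (ι → α) × α, F p.1 (p.1 k) := Equiv.sum_comp e fun p => F p.1 (p.1 k)
    _ = Fintype.card α • ∑ ω, F ω (ω k) := by
        rw [Fintype.sum_prod_type, smul_sum]
        simp

/-- The padding value `⟨0, hn⟩` is never read by the first `K` BCM steps. -/
def padSeq {K : ℕ} (hn : 0 < n) (ω : Fin K → Fin n) : ℕ → Fin n :=
  fun j => if h : j < K then ω ⟨j, h⟩ else ⟨0, hn⟩

variable {A : Matrix (Fin n) (Fin n) ℝ} {σ0 : Conf n r}

lemma iterSeq_congr {ω ω' : ℕ → Fin n} {k : ℕ} (h : ∀ j < k, ω j = ω' j) :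
    iterSeq A σ0 ω k = iterSeq A σ0 ω' k := by
  induction k with
  | zero => rfl
  | succ k ih =>
      simp only [iterSeq, ih fun j hj => h j (Nat.lt_succ_of_lt hj), h k k.lt_succ_self]

lemma iterSeq_padSeq_succ {K : ℕ} (hn : 0 < n) (ω : Fin K → Fin n) {k : ℕ} (hk : k < K) :
    iterSeq A σ0 (padSeq hn ω) (k + 1) = Tupd A (iterSeq A σ0 (padSeq hn ω) k) (ω ⟨k, hk⟩) := by
  simp only [iterSeq, padSeq, dif_pos hk]

lemma iterSeq_padSeq_update {K : ℕ} (hn : 0 < n) (ω : Fin K → Fin n) {k : ℕ} (hk : k < K)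
    (a : Fin n) :
    iterSeq A σ0 (padSeq hn (update ω ⟨k, hk⟩ a)) k = iterSeq A σ0 (padSeq hn ω) k :=
  iterSeq_congr fun j hj => by
    simp only [padSeq, dif_pos (hj.trans hk)]
    exact update_of_ne (Fin.ne_of_val_ne hj.ne) _ _

variable (hA : A.IsSymm) (hdiag : ∀ i, A i i = 0) (hσ0 : inM σ0)
include hA hdiag hσ0

lemma sum_gradNormSq_le_sum_fval_succ_sub {K : ℕ} (hn : 0 < n) {k : ℕ} (hk : k < K) :
    ∑ ω : Fin K → Fin n, gradNormSq A (iterSeq A σ0 (padSeq hn ω) k)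
      ≤ 2 * Anorm1 A * n * ∑ ω : Fin K → Fin n,
          (fval A (iterSeq A σ0 (padSeq hn ω) (k + 1)) - fval A (iterSeq A σ0 (padSeq hn ω) k)) := by
  calc ∑ ω : Fin K → Fin n, gradNormSq A (iterSeq A σ0 (padSeq hn ω) k)
      ≤ ∑ ω : Fin K → Fin n, 2 * Anorm1 A * ∑ i, (fval A (Tupd A (iterSeq A σ0 (padSeq hn ω) k) i)
          - fval A (iterSeq A σ0 (padSeq hn ω) k)) :=
        sum_le_sum fun ω _ => gradNormSq_le_sum_fval_Tupd_sub hA hdiag (inM_iterSeq hσ0 _ k)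
    _ = 2 * Anorm1 A * (n • ∑ ω : Fin K → Fin n, (fval A (Tupd A (iterSeq A σ0 (padSeq hn ω) k)
          (ω ⟨k, hk⟩)) - fval A (iterSeq A σ0 (padSeq hn ω) k))) := by
        rw [← mul_sum, sum_sum_eq_card_nsmul_sum_apply ⟨k, hk⟩
          (fun ω i => fval A (Tupd A (iterSeq A σ0 (padSeq hn ω) k) i)
            - fval A (iterSeq A σ0 (padSeq hn ω) k))
          fun ω a => by simp only [iterSeq_padSeq_update], Fintype.card_fin]
    _ = _ := by simp only [iterSeq_padSeq_succ hn _ hk, nsmul_eq_mul]; ring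

lemma sum_range_sum_gradNormSq_le (hn : 0 < n) (K : ℕ) :
    ∑ k ∈ range K, ∑ ω : Fin K → Fin n, gradNormSq A (iterSeq A σ0 (padSeq hn ω) k)
      ≤ 2 * n * Anorm1 A * (n ^ K * (fstar (r := r) A - fval A σ0)) := by
  have hA1 : 0 ≤ 2 * Anorm1 A * n := by have := Anorm1_nonneg A; positivity
  calc ∑ k ∈ range K, ∑ ω : Fin K → Fin n, gradNormSq A (iterSeq A σ0 (padSeq hn ω) k)
      ≤ ∑ k ∈ range K, 2 * Anorm1 A * n * ∑ ω : Fin K → Fin n,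
          (fval A (iterSeq A σ0 (padSeq hn ω) (k + 1)) - fval A (iterSeq A σ0 (padSeq hn ω) k)) :=
        sum_le_sum fun k hk =>
          sum_gradNormSq_le_sum_fval_succ_sub hA hdiag hσ0 hn (mem_range.mp hk)
    _ = 2 * Anorm1 A * n * ∑ ω : Fin K → Fin n,
          (fval A (iterSeq A σ0 (padSeq hn ω) K) - fval A σ0) := by
        rw [← mul_sum, sum_comm]
        exact congrArg _ (sum_congr rfl fun ω _ =>
          sum_range_sub (fun k => fval A (iterSeq A σ0 (padSeq hn ω) k)) K)
    _ ≤ 2 * Anorm1 A * n * ∑ _ω : Fin K → Fin n, (fstar (r := r) A - fval A σ0) :=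
        mul_le_mul_of_nonneg_left (sum_le_sum fun ω _ =>
          sub_le_sub_right (fval_le_fstar (inM_iterSeq hσ0 _ K)) _) hA1
    _ = 2 * n * Anorm1 A * (n ^ K * (fstar (r := r) A - fval A σ0)) := by
        simp only [sum_const, card_univ, Fintype.card_fun, Fintype.card_fin, nsmul_eq_mul]
        push_cast
        ring

end Averaging

end BCM

theorem uniform_bcm_sublinear_general {n r : ℕ} (hn : 0 < n)
    (A : Matrix (Fin n) (Fin n) ℝ) (hA : A.IsSymm) (hdiag : ∀ i, A i i = 0)
    (σ0 : Conf n r) (hσ0 : inM σ0) (K : ℕ) (hK : 1 ≤ K) :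
    ∃ k < K,
      ((n : ℝ) ^ K)⁻¹ * (∑ ω : Fin K → Fin n,
          gradNormSq A (iterSeq A σ0 (fun j => if h : j < K then ω ⟨j, h⟩ else ⟨0, hn⟩) k))
        ≤ 2 * n * Anorm1 A * (fstar (r := r) A - fval A σ0) / K := by
  obtain ⟨k, hk, hle⟩ := BCM.exists_lt_le_div_of_sum_range_le hK
    (BCM.sum_range_sum_gradNormSq_le hA hdiag hσ0 hn K)
  refine ⟨k, hk, ?_⟩
  calc ((n : ℝ) ^ K)⁻¹ * ∑ ω : Fin K → Fin n, gradNormSq A (iterSeq A σ0 (BCM.padSeq hn ω) k)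
      ≤ ((n : ℝ) ^ K)⁻¹ * (2 * n * Anorm1 A * (n ^ K * (fstar (r := r) A - fval A σ0)) / K) :=
        mul_le_mul_of_nonneg_left hle (by positivity)
    _ = 2 * n * Anorm1 A * (fstar (r := r) A - fval A σ0) / K := by
        have hn' : (n : ℝ) ≠ 0 := Nat.cast_ne_zero.mpr hn.ne'
        field_simp

/-- global sublinear convergence of BCM with uniform sampling, in
expectation over all coordinate sequences `ω ∈ {1,…,n}^K`. -/
theorem uniform_bcm_sublinear {n r : ℕ} (hn : 0 < n) (hr : 0 < r)
    (A : Matrix (Fin n) (Fin n) ℝ) (hA : A.IsSymm) (hdiag : ∀ i, A i i = 0) (hA0 : A ≠ 0)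
    (σ0 : Conf n r) (hσ0 : inM σ0) (K : ℕ) (hK : 1 ≤ K) :
    ∃ k < K,
      ((n : ℝ) ^ K)⁻¹ * (∑ ω : Fin K → Fin n,
          gradNormSq A (iterSeq A σ0 (fun j => if h : j < K then ω ⟨j, h⟩ else ⟨0, hn⟩) k))
        ≤ 2 * n * Anorm1 A * (fstar (r := r) A - fval A σ0) / K :=
  uniform_bcm_sublinear_general hn A hA hdiag σ0 hσ0 K hK
end
end

section
/- (Gradient-norm lower bound along geodesics through a stationary point.) Let σ̄ ∈ M_r be a stationary point, i.e. g_i(σ̄) ≠ 0 and σ̄_i = g_i(σ̄)/‖g_i(σ̄)‖ for every i. Let u ∈ T_σ̄ M_r with ‖u‖_F = 1 and let 0 ≤ t ≤ 1. Then ‖grad f(σ̄(t))‖_F² ≥ 2 t² Σ_{i : u_i ≠ 0} (‖u_i‖ ‖g_i(σ̄)‖ − ⟨u_i, v_i⟩/‖u_i‖)² − 88 n ‖A‖₁² t³, where v_i = Σ_{j≠i} A_{ij} u_j. -/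
open scoped BigOperators RealInnerProductSpace
open Finset Matrix

noncomputable section

/-! At time `t` the `i`-th row of the geodesic is a unit vector `σ_i(t)` and its unit velocity
`w_i(t)` is orthogonal to it, so the `i`-th term of `‖grad f(σ(t))‖²` is at least
`⟨w_i(t), g_i(σ(t))⟩²`. To first order `σ_j(t) = σ̄_j + t u_j + O(t²)` and
`w_i(t) = u_i/‖u_i‖ − t ‖u_i‖ σ̄_i + O(t²)`; since `g_i(σ̄) = ‖g_i(σ̄)‖ σ̄_i` is orthogonal to `u_i`
at a stationary point, this gives `⟨w_i(t), g_i(σ(t))⟩ = −c_i t + O(‖A‖₁ t²)` with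
`c_i = ‖u_i‖ ‖g_i(σ̄)‖ − ⟨u_i, v_i⟩/‖u_i‖`. Squaring loses `16 ‖A‖₁² t³` per row. -/

lemma abs_cos_sub_one_add_abs_sin_sub_self_le {y : ℝ} (h0 : 0 ≤ y) (h1 : y ≤ 1) :
    |Real.cos y - 1| + |Real.sin y - y| ≤ y ^ 2 := by
  have hcos : |Real.cos y - 1| ≤ y ^ 2 / 2 := by
    rw [abs_le]
    constructor <;> linarith [Real.one_sub_sq_div_two_le_cos (x := y), Real.cos_le_one y]
  have hsin : |Real.sin y - y| ≤ y ^ 3 / 6 := by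
    rw [abs_sub_comm, abs_of_nonneg (sub_nonneg.2 (Real.sin_le h0))]
    rcases h0.eq_or_lt with rfl | hy
    · simp
    · linarith [Real.sin_gt_sub_cube hy]
  nlinarith

lemma sq_sub_le_sq_of_abs_add_le {p q ε : ℝ} (h : |p + q| ≤ ε) :
    q ^ 2 - 2 * |q| * ε ≤ p ^ 2 := by
  have : (p + q) * q ≤ ε * |q| :=
    (le_abs_self _).trans (by rw [abs_mul]; exact mul_le_mul_of_nonneg_right h (abs_nonneg q))
  nlinarith [sq_nonneg (p + q)]

section GreatCircle

variable {E : Type*} [NormedAddCommGroup E] [InnerProductSpace ℝ E]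

def greatCircle (σ x : E) (t : ℝ) : E :=
  Real.cos (‖x‖ * t) • σ + (Real.sin (‖x‖ * t) / ‖x‖) • x

def greatCircleTangent (σ x : E) (t : ℝ) : E :=
  (-Real.sin (‖x‖ * t)) • σ + (Real.cos (‖x‖ * t) / ‖x‖) • x

variable {σ x : E}

lemma inner_smul_add_div_norm_smul (hσ : ‖σ‖ = 1) (hx : ⟪x, σ⟫ = 0) (hx0 : x ≠ 0)
    (c s c' s' : ℝ) :
    ⟪c • σ + (s / ‖x‖) • x, c' • σ + (s' / ‖x‖) • x⟫ = c * c' + s * s' := by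
  have hσx : ⟪σ, x⟫ = 0 := by rw [real_inner_comm, hx]
  have hnx : ‖x‖ ≠ 0 := norm_ne_zero_iff.2 hx0
  simp only [inner_add_left, inner_add_right, real_inner_smul_left, real_inner_smul_right,
    real_inner_self_eq_norm_sq, hσ, hx, hσx]
  field_simp
  ring

lemma norm_smul_add_div_norm_smul (hσ : ‖σ‖ = 1) (hx : ⟪x, σ⟫ = 0) (hx0 : x ≠ 0)
    {c s : ℝ} (hcs : c ^ 2 + s ^ 2 = 1) : ‖c • σ + (s / ‖x‖) • x‖ = 1 := by
  have h := inner_smul_add_div_norm_smul hσ hx hx0 c s c s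
  rw [real_inner_self_eq_norm_sq, ← sq, ← sq, hcs] at h
  exact (pow_eq_one_iff_of_nonneg (norm_nonneg _) two_ne_zero).1 h

lemma norm_greatCircle (hσ : ‖σ‖ = 1) (hx : ⟪x, σ⟫ = 0) (t : ℝ) :
    ‖greatCircle σ x t‖ = 1 := by
  rcases eq_or_ne x 0 with rfl | hx0
  · simp [greatCircle, hσ]
  · exact norm_smul_add_div_norm_smul hσ hx hx0 (Real.cos_sq_add_sin_sq _)

lemma norm_greatCircleTangent (hσ : ‖σ‖ = 1) (hx : ⟪x, σ⟫ = 0) (hx0 : x ≠ 0) (t : ℝ) :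
    ‖greatCircleTangent σ x t‖ = 1 :=
  norm_smul_add_div_norm_smul hσ hx hx0 (by rw [neg_sq, Real.sin_sq_add_cos_sq])

lemma inner_greatCircle_greatCircleTangent (hσ : ‖σ‖ = 1) (hx : ⟪x, σ⟫ = 0) (hx0 : x ≠ 0)
    (t : ℝ) : ⟪greatCircle σ x t, greatCircleTangent σ x t⟫ = 0 := by
  rw [greatCircle, greatCircleTangent, inner_smul_add_div_norm_smul hσ hx hx0]
  ring

lemma norm_greatCircle_sub_le (hσ : ‖σ‖ = 1) (hx1 : ‖x‖ ≤ 1) {t : ℝ} (ht0 : 0 ≤ t)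
    (ht1 : t ≤ 1) : ‖greatCircle σ x t - (σ + t • x)‖ ≤ t ^ 2 := by
  set a := ‖x‖
  have hsplit : greatCircle σ x t - (σ + t • x)
      = (Real.cos (a * t) - 1) • σ + (Real.sin (a * t) / a - t) • x := by
    simp only [greatCircle, sub_smul, one_smul]
    abel
  have hsin : ‖(Real.sin (a * t) / a - t) • x‖ = |Real.sin (a * t) - a * t| := by
    rcases eq_or_ne x 0 with rfl | hx0
    · simp [a]
    · have ha : a ≠ 0 := norm_ne_zero_iff.2 hx0
      rw [norm_smul, Real.norm_eq_abs, ← abs_norm x, ← abs_mul, sub_mul, div_mul_cancel₀ _ ha,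
        mul_comm t]
  have hat : a * t ≤ 1 := by nlinarith [norm_nonneg x]
  calc ‖greatCircle σ x t - (σ + t • x)‖
      ≤ |Real.cos (a * t) - 1| + |Real.sin (a * t) - a * t| := by
        rw [hsplit, ← hsin]
        refine (norm_add_le _ _).trans (le_of_eq ?_)
        rw [norm_smul, hσ, mul_one, Real.norm_eq_abs]
    _ ≤ (a * t) ^ 2 := abs_cos_sub_one_add_abs_sin_sub_self_le (by positivity) hat
    _ ≤ t ^ 2 := by
        rw [mul_pow]
        exact mul_le_of_le_one_left (sq_nonneg t) (pow_le_one₀ (norm_nonneg x) hx1)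

lemma norm_greatCircleTangent_sub_le (hσ : ‖σ‖ = 1) (hx0 : x ≠ 0) (hx1 : ‖x‖ ≤ 1)
    {t : ℝ} (ht0 : 0 ≤ t) (ht1 : t ≤ 1) :
    ‖greatCircleTangent σ x t - (‖x‖⁻¹ • x - (‖x‖ * t) • σ)‖ ≤ t ^ 2 := by
  set a := ‖x‖
  have ha : a ≠ 0 := norm_ne_zero_iff.2 hx0
  have hsplit : greatCircleTangent σ x t - (a⁻¹ • x - (a * t) • σ)
      = (a * t - Real.sin (a * t)) • σ + ((Real.cos (a * t) - 1) / a) • x := by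
    simp only [greatCircleTangent, sub_div, sub_smul, neg_smul, one_div]
    abel
  have hcos : ‖((Real.cos (a * t) - 1) / a) • x‖ = |Real.cos (a * t) - 1| := by
    rw [norm_smul, Real.norm_eq_abs, abs_div, abs_norm, div_mul_cancel₀ _ ha]
  have hat : a * t ≤ 1 := by nlinarith [norm_nonneg x]
  calc ‖greatCircleTangent σ x t - (a⁻¹ • x - (a * t) • σ)‖
      ≤ |Real.cos (a * t) - 1| + |Real.sin (a * t) - a * t| := by
        rw [hsplit, add_comm |_|, ← hcos, abs_sub_comm]
        refine (norm_add_le _ _).trans (le_of_eq ?_)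
        rw [norm_smul, hσ, mul_one, Real.norm_eq_abs]
    _ ≤ (a * t) ^ 2 := abs_cos_sub_one_add_abs_sin_sub_self_le (by positivity) hat
    _ ≤ t ^ 2 := by
        rw [mul_pow]
        exact mul_le_of_le_one_left (sq_nonneg t) (pow_le_one₀ (norm_nonneg x) hx1)

lemma inner_sq_le_norm_sq_sub_inner_sq {w : E} (hσ : ‖σ‖ = 1) (hw : ‖w‖ = 1)
    (hσw : ⟪σ, w⟫ = 0) (g : E) : ⟪w, g⟫ ^ 2 ≤ ‖g‖ ^ 2 - ⟪σ, g⟫ ^ 2 := by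
  have hon : Orthonormal ℝ ![σ, w] := by
    refine orthonormal_iff_ite.2 fun i j => ?_
    fin_cases i <;> fin_cases j <;>
      simp [hσ, hw, hσw, real_inner_comm σ w]
  have h := hon.sum_inner_products_le g (s := univ)
  simp only [Fin.sum_univ_two, Matrix.cons_val_zero, Matrix.cons_val_one, Real.norm_eq_abs,
    sq_abs] at h
  linarith

lemma inner_sq_le_norm_sq (hσ : ‖σ‖ = 1) (g : E) : ⟪σ, g⟫ ^ 2 ≤ ‖g‖ ^ 2 := by
  simpa [hσ] using pow_le_pow_left₀ (abs_nonneg _) (abs_real_inner_le_norm σ g) 2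

end GreatCircle

section Configurations

variable {n r : ℕ} {A : Matrix (Fin n) (Fin n) ℝ}

lemma gvec_add (σ τ : Conf n r) (i : Fin n) :
    gvec A (σ + τ) i = gvec A σ i + gvec A τ i := by
  simp only [gvec, Pi.add_apply, smul_add, sum_add_distrib]

lemma gvec_smul (c : ℝ) (σ : Conf n r) (i : Fin n) :
    gvec A (c • σ) i = c • gvec A σ i := by
  simp only [gvec, Pi.smul_apply, smul_sum, smul_comm c]

lemma sum_abs_le_Anorm1 (hA : A.IsSymm) (i : Fin n) : ∑ j, |A i j| ≤ Anorm1 A := by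
  have hcol : ∑ j, |A i j| = ∑ j, |A j i| := by
    refine sum_congr rfl fun j _ => ?_
    rw [← hA.apply i j]
  rw [hcol]
  exact le_ciSup (f := fun k => ∑ j, |A j k|) (Set.finite_range _).bddAbove i

lemma norm_gvec_le (hA : A.IsSymm) {v : Conf n r} {c : ℝ} (hv : ∀ j, ‖v j‖ ≤ c) (i : Fin n) :
    ‖gvec A v i‖ ≤ Anorm1 A * c := by
  have hc : 0 ≤ c := (norm_nonneg _).trans (hv i)
  calc ‖gvec A v i‖ ≤ ∑ j ∈ univ.erase i, |A i j| * c := by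
        refine (norm_sum_le _ _).trans (sum_le_sum fun j _ => ?_)
        rw [norm_smul, Real.norm_eq_abs]
        exact mul_le_mul_of_nonneg_left (hv j) (abs_nonneg _)
    _ ≤ (∑ j, |A i j|) * c := by
        rw [← sum_mul]
        exact mul_le_mul_of_nonneg_right
          (sum_le_sum_of_subset_of_nonneg (subset_univ _) fun j _ _ => abs_nonneg _) hc
    _ ≤ Anorm1 A * c := mul_le_mul_of_nonneg_right (sum_abs_le_Anorm1 hA i) hc

lemma norm_le_one_of_fnormSq_eq_one {u : Conf n r} (hu : fnormSq u = 1) (j : Fin n) :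
    ‖u j‖ ≤ 1 := by
  have h : ‖u j‖ ^ 2 ≤ fnormSq u :=
    single_le_sum (f := fun j => ‖u j‖ ^ 2) (fun _ _ => sq_nonneg _) (mem_univ j)
  rw [hu] at h
  exact (sq_le_one_iff₀ (norm_nonneg _)).1 h

namespace stationary

variable {σ : Conf n r}

lemma norm_eq_one (hσ : stationary A σ) (i : Fin n) : ‖σ i‖ = 1 := by
  rw [(hσ i).2]
  exact norm_smul_inv_norm (hσ i).1

lemma gvec_eq (hσ : stationary A σ) (i : Fin n) : gvec A σ i = ‖gvec A σ i‖ • σ i := by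
  conv_rhs => rw [(hσ i).2]
  rw [smul_smul, mul_inv_cancel₀ (norm_ne_zero_iff.2 (hσ i).1), one_smul]

lemma inner_gvec_self (hσ : stationary A σ) (i : Fin n) :
    ⟪σ i, gvec A σ i⟫ = ‖gvec A σ i‖ := by
  conv_lhs => rw [hσ.gvec_eq]
  rw [real_inner_smul_right, real_inner_self_eq_norm_sq, hσ.norm_eq_one, one_pow, mul_one]

lemma inner_gvec_of_tangent (hσ : stationary A σ) {u : Conf n r} (hu : tangent σ u)
    (i : Fin n) : ⟪u i, gvec A σ i⟫ = 0 := by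
  rw [hσ.gvec_eq, real_inner_smul_right, hu i, mul_zero]

end stationary

end Configurations

section GeodesicRows

variable {n r : ℕ} {A : Matrix (Fin n) (Fin n) ℝ} {σ u : Conf n r} {t : ℝ}

lemma abs_inner_gvec_geo_add_le (hA : A.IsSymm) (hσ : stationary A σ) (hu1 : ∀ j, ‖u j‖ ≤ 1)
    (hu : tangent σ u) (ht0 : 0 ≤ t) (ht1 : t ≤ 1) {i : Fin n} (hi : u i ≠ 0) :
    |⟪greatCircleTangent (σ i) (u i) t, gvec A (geo σ u t) i⟫
      + (‖u i‖ * ‖gvec A σ i‖ - ⟪u i, gvec A u i⟫ / ‖u i‖) * t| ≤ 4 * Anorm1 A * t ^ 2 := by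
  set K := Anorm1 A
  set a := ‖u i‖
  set g := gvec A σ i
  set v := gvec A u i
  set w := greatCircleTangent (σ i) (u i) t
  set w₀ : Pt r := a⁻¹ • u i - (a * t) • σ i
  set e : Conf n r := fun j => geo σ u t j - (σ j + t • u j)
  have ha : 0 < a := norm_pos_iff.2 hi
  have hgK : ‖g‖ ≤ K :=
    (norm_gvec_le hA (fun j => (hσ.norm_eq_one j).le) i).trans_eq (mul_one K)
  have hvK : ‖v‖ ≤ K := (norm_gvec_le hA hu1 i).trans_eq (mul_one K)
  have heK : ‖gvec A e i‖ ≤ K * t ^ 2 :=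
    norm_gvec_le hA (fun j => norm_greatCircle_sub_le (hσ.norm_eq_one j) (hu1 j) ht0 ht1) i
  have hww₀ : ‖w - w₀‖ ≤ t ^ 2 :=
    norm_greatCircleTangent_sub_le (hσ.norm_eq_one i) hi (hu1 i) ht0 ht1
  have hgeo : gvec A (geo σ u t) i = (g + t • v) + gvec A e i := by
    have : geo σ u t = σ + t • u + e := by
      funext j
      simp only [e, Pi.add_apply, Pi.smul_apply, add_sub_cancel]
    rw [this, gvec_add, gvec_add, gvec_smul]
  have hw₀ : ⟪w₀, g + t • v⟫ = -((a * ‖g‖ - ⟪u i, v⟫ / a) * t) - t ^ 2 * a * ⟪σ i, v⟫ := by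
    simp only [w₀, inner_sub_left, inner_add_right, real_inner_smul_left, real_inner_smul_right,
      g, hσ.inner_gvec_of_tangent hu, hσ.inner_gvec_self]
    field_simp
    ring
  have hdecomp : ⟪w, gvec A (geo σ u t) i⟫ + (a * ‖g‖ - ⟪u i, v⟫ / a) * t
      = ⟪w - w₀, g + t • v⟫ - t ^ 2 * a * ⟪σ i, v⟫ + ⟪w, gvec A e i⟫ := by
    rw [hgeo, inner_add_right, inner_sub_left, hw₀]
    ring
  have hgv : ‖g + t • v‖ ≤ 2 * K := by
    refine (norm_add_le _ _).trans ?_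
    rw [norm_smul, Real.norm_eq_abs, abs_of_nonneg ht0]
    nlinarith [norm_nonneg v]
  have h₁ : |⟪w - w₀, g + t • v⟫| ≤ t ^ 2 * (2 * K) :=
    (abs_real_inner_le_norm _ _).trans (mul_le_mul hww₀ hgv (norm_nonneg _) (sq_nonneg t))
  have h₂ : |t ^ 2 * a * ⟪σ i, v⟫| ≤ t ^ 2 * K := by
    have hσv : |⟪σ i, v⟫| ≤ K := by
      have h := abs_real_inner_le_norm (σ i) v
      rw [hσ.norm_eq_one i, one_mul] at h
      exact h.trans hvK
    rw [abs_mul, abs_mul, abs_of_nonneg (sq_nonneg t), abs_of_pos ha, mul_assoc]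
    exact mul_le_mul_of_nonneg_left
      ((mul_le_of_le_one_left (abs_nonneg _) (hu1 i)).trans hσv) (sq_nonneg t)
  have h₃ : |⟪w, gvec A e i⟫| ≤ K * t ^ 2 := by
    refine (abs_real_inner_le_norm _ _).trans ?_
    rw [norm_greatCircleTangent (hσ.norm_eq_one i) (hu i) hi, one_mul]
    exact heK
  rw [hdecomp]
  calc _ ≤ |⟪w - w₀, g + t • v⟫| + |t ^ 2 * a * ⟪σ i, v⟫| + |⟪w, gvec A e i⟫| :=
        (abs_add_le _ _).trans (add_le_add (abs_sub _ _) le_rfl)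
    _ ≤ 4 * K * t ^ 2 := by linarith

lemma gradient_row_lower_bound_geo (hA : A.IsSymm) (hσ : stationary A σ)
    (hu1 : ∀ j, ‖u j‖ ≤ 1) (hu : tangent σ u) (ht0 : 0 ≤ t) (ht1 : t ≤ 1) {i : Fin n}
    (hi : u i ≠ 0) :
    (‖u i‖ * ‖gvec A σ i‖ - ⟪u i, gvec A u i⟫ / ‖u i‖) ^ 2 * t ^ 2 - 16 * Anorm1 A ^ 2 * t ^ 3
      ≤ ‖gvec A (geo σ u t) i‖ ^ 2 - ⟪geo σ u t i, gvec A (geo σ u t) i⟫ ^ 2 := by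
  set K := Anorm1 A
  set c := ‖u i‖ * ‖gvec A σ i‖ - ⟪u i, gvec A u i⟫ / ‖u i‖
  have ha : 0 < ‖u i‖ := norm_pos_iff.2 hi
  have hgK : ‖gvec A σ i‖ ≤ K :=
    (norm_gvec_le hA (fun j => (hσ.norm_eq_one j).le) i).trans_eq (mul_one K)
  have hvK : ‖gvec A u i‖ ≤ K := (norm_gvec_le hA hu1 i).trans_eq (mul_one K)
  have hc : |c| ≤ 2 * K := by
    have h₁ : |‖u i‖ * ‖gvec A σ i‖| ≤ K := by
      rw [abs_of_nonneg (by positivity)]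
      nlinarith [hu1 i, norm_nonneg (gvec A σ i)]
    have h₂ : |⟪u i, gvec A u i⟫ / ‖u i‖| ≤ K := by
      rw [abs_div, abs_norm, div_le_iff₀ ha]
      nlinarith [abs_real_inner_le_norm (u i) (gvec A u i), norm_nonneg (u i)]
    exact (abs_sub _ _).trans (by linarith)
  have hK : 0 ≤ K := (norm_nonneg _).trans hgK
  calc c ^ 2 * t ^ 2 - 16 * K ^ 2 * t ^ 3
      ≤ (c * t) ^ 2 - 2 * |c * t| * (4 * K * t ^ 2) := by
        rw [abs_mul, abs_of_nonneg ht0]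
        nlinarith [mul_le_mul_of_nonneg_right hc (by positivity : 0 ≤ 8 * K * t ^ 3)]
    _ ≤ ⟪greatCircleTangent (σ i) (u i) t, gvec A (geo σ u t) i⟫ ^ 2 :=
        sq_sub_le_sq_of_abs_add_le (abs_inner_gvec_geo_add_le hA hσ hu1 hu ht0 ht1 hi)
    _ ≤ _ :=
        inner_sq_le_norm_sq_sub_inner_sq (norm_greatCircle (hσ.norm_eq_one i) (hu i) t)
          (norm_greatCircleTangent (hσ.norm_eq_one i) (hu i) hi t)
          (inner_greatCircle_greatCircleTangent (hσ.norm_eq_one i) (hu i) hi t) _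

end GeodesicRows

theorem stationary_gradient_lower_bound_general {n r : ℕ}
    (A : Matrix (Fin n) (Fin n) ℝ) (hA : A.IsSymm)
    (σb : Conf n r) (hstat : stationary A σb)
    (u : Conf n r) (hu : tangent σb u) (hun : fnormSq u = 1)
    (t : ℝ) (ht0 : 0 ≤ t) (ht1 : t ≤ 1) :
    2 * t ^ 2 * (∑ i ∈ suppu u,
        (‖u i‖ * ‖gvec A σb i‖ - ⟪u i, gvec A u i⟫ / ‖u i‖) ^ 2)
      - 88 * n * Anorm1 A ^ 2 * t ^ 3 ≤ gradNormSq A (geo σb u t) := by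
  set σt := geo σb u t
  have hrows : ∑ i ∈ suppu u, ((‖u i‖ * ‖gvec A σb i‖ - ⟪u i, gvec A u i⟫ / ‖u i‖) ^ 2 * t ^ 2
        - 16 * Anorm1 A ^ 2 * t ^ 3)
      ≤ ∑ i, (‖gvec A σt i‖ ^ 2 - ⟪σt i, gvec A σt i⟫ ^ 2) :=
    (sum_le_sum fun i hi => gradient_row_lower_bound_geo hA hstat
        (norm_le_one_of_fnormSq_eq_one hun) hu ht0 ht1 (by simpa [suppu] using hi)).trans
      (sum_le_sum_of_subset_of_nonneg (subset_univ _) fun i _ _ =>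
        sub_nonneg.2 (inner_sq_le_norm_sq (norm_greatCircle (hstat.norm_eq_one i) (hu i) t) _))
  have hcard : ((suppu u).card : ℝ) ≤ n := by
    exact_mod_cast (card_le_univ _).trans_eq (Fintype.card_fin n)
  rw [sum_sub_distrib, sum_const, nsmul_eq_mul, ← sum_mul] at hrows
  rw [gradNormSq]
  have hnK : 0 ≤ (n : ℝ) * Anorm1 A ^ 2 * t ^ 3 := by positivity
  nlinarith [mul_le_mul_of_nonneg_right hcard (by positivity : 0 ≤ 16 * Anorm1 A ^ 2 * t ^ 3)]

/-- gradient-norm lower bound along geodesics through a stationary point. -/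
theorem stationary_gradient_lower_bound {n r : ℕ} (hn : 0 < n) (hr : 0 < r)
    (A : Matrix (Fin n) (Fin n) ℝ) (hA : A.IsSymm) (hdiag : ∀ i, A i i = 0)
    (σb : Conf n r) (hσb : inM σb) (hstat : stationary A σb)
    (u : Conf n r) (hu : tangent σb u) (hun : fnormSq u = 1)
    (t : ℝ) (ht0 : 0 ≤ t) (ht1 : t ≤ 1) :
    2 * t ^ 2 * (∑ i ∈ suppu u,
        (‖u i‖ * ‖gvec A σb i‖ - ⟪u i, gvec A u i⟫ / ‖u i‖) ^ 2)
      - 88 * n * Anorm1 A ^ 2 * t ^ 3 ≤ gradNormSq A (geo σb u t) :=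
  stationary_gradient_lower_bound_general A hA σb hstat u hu hun t ht0 ht1
end
end

section
/- (Kernel of the dual slack quadratic form on the tangent space.) Let σ ∈ M_r and let Λ be an n×n real diagonal matrix such that Λ − A is positive semidefinite and (Λ − A)σ = 0. Let r* = rank(σ). Assume strict complementarity: the kernel of Λ − A equals the column space of σ (equivalently, rank(Λ − A) = n − r*). Assume dual nondegeneracy: there exists Q₁ ∈ ℝ^{n×r*} with orthonormal columns whose column space equals the column space of σ such that, writing q_1,…,q_n ∈ ℝ^{r*} for the rows of Q₁, the matrices q_1 q_1ᵀ, …, q_n q_nᵀ span the space of r*×r* real symmetric matrices. Then for every u ∈ T_σ M_r: ⟨u, (Λ − A)u⟩_F = 0 if and only if u ∈ V_σ. -/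
open scoped BigOperators
open Finset Matrix

noncomputable section

/-! Since `Λ - A` is positive semidefinite, `⟨u, (Λ - A)u⟩_F = 0` forces `(Λ - A)u = 0`, so by
strict complementarity the columns of `u` and of `σ` lie in the column space of `Q₁`:
`u = Q₁W` and `σ = Q₁R`. Tangency says that `Q₁(WRᵀ + RWᵀ)Q₁ᵀ = uσᵀ + σuᵀ` has zero
diagonal, i.e. the symmetric matrix `WRᵀ + RWᵀ` is trace-orthogonal to every `qᵢqᵢᵀ`; by dual
nondegeneracy it is orthogonal to itself, hence zero. As `col(Q₁) = col(σ)`, `R` has a right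
inverse `P`, and then `B = PW - WᵀPᵀ - P(WRᵀ)Pᵀ` is skew with `RB = W`, so `u = σB`. -/

namespace Matrix

open scoped ComplexOrder

variable {l m n p : Type*} [Fintype m] [Fintype n] [Fintype p]

theorem PosSemidef.mul_eq_zero_of_trace_conjTranspose_mul_mul_eq_zero {𝕜 : Type*} [RCLike 𝕜]
    {S : Matrix n n 𝕜} (hS : S.PosSemidef) {X : Matrix n m 𝕜} (h : (Xᴴ * S * X).trace = 0) :
    S * X = 0 := by
  have hzero : Xᴴ * S * X = 0 := (hS.conjTranspose_mul_mul_same X).trace_eq_zero_iff.mp h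
  refine ext_iff_mulVec.mpr fun v => ?_
  rw [← mulVec_mulVec, zero_mulVec, ← hS.dotProduct_mulVec_zero_iff]
  calc star (X *ᵥ v) ⬝ᵥ S *ᵥ X *ᵥ v = star v ⬝ᵥ (Xᴴ * S * X) *ᵥ v := by
        simp only [star_mulVec, dotProduct_mulVec, vecMul_vecMul]
    _ = 0 := by rw [hzero, zero_mulVec, dotProduct_zero]

section

variable {R : Type*} [CommSemiring R]

theorem range_mulVecLin_le_ker_of_mul_eq_zero {S : Matrix l n R} {X : Matrix n m R}
    (h : S * X = 0) : LinearMap.range X.mulVecLin ≤ LinearMap.ker S.mulVecLin :=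
  LinearMap.range_le_ker_iff.mpr (by rw [← mulVecLin_mul, h, mulVecLin_zero])

theorem mul_transpose_mul_eq_self_of_range_le [DecidableEq m] {Q : Matrix n m R}
    (hQ : Qᵀ * Q = 1) {X : Matrix n p R}
    (hX : LinearMap.range X.mulVecLin ≤ LinearMap.range Q.mulVecLin) : Q * (Qᵀ * X) = X := by
  refine ext_iff_mulVec.mpr fun v => ?_
  obtain ⟨z, hz⟩ := hX (LinearMap.mem_range_self X.mulVecLin v)
  simp only [mulVecLin_apply] at hz
  rw [← mulVec_mulVec, ← mulVec_mulVec, ← hz, mulVec_mulVec, mulVec_mulVec, Matrix.mul_assoc, hQ,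
    Matrix.mul_one]

theorem exists_transpose_mul_mul_eq_one_of_range_le [DecidableEq m] {Q : Matrix n m R}
    (hQ : Qᵀ * Q = 1) {X : Matrix n p R}
    (h : LinearMap.range Q.mulVecLin ≤ LinearMap.range X.mulVecLin) :
    ∃ P : Matrix p m R, Qᵀ * X * P = 1 := by
  refine mulVec_surjective_iff_exists_right_inverse.mp fun x => ?_
  obtain ⟨z, hz⟩ := h (LinearMap.mem_range_self Q.mulVecLin x)
  simp only [mulVecLin_apply] at hz
  exact ⟨z, by rw [← mulVec_mulVec, hz, mulVec_mulVec, hQ, one_mulVec]⟩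

end

section

variable {R : Type*} [CommRing R]

theorem dotProduct_mulVec_mul_transpose_add (q : m → R) (W V : Matrix m n R) :
    q ⬝ᵥ (W * Vᵀ + V * Wᵀ) *ᵥ q = 2 * ((q ᵥ* W) ⬝ᵥ (q ᵥ* V)) := by
  simp only [add_mulVec, dotProduct_add, ← mulVec_mulVec, dotProduct_mulVec, mulVec_transpose]
  rw [dotProduct_comm (q ᵥ* V)]
  ring

theorem exists_skew_mul_eq [DecidableEq m] {V : Matrix m n R} {P : Matrix n m R} (hP : V * P = 1)
    {W : Matrix m n R} (hW : W * Vᵀ + V * Wᵀ = 0) : ∃ B : Matrix n n R, Bᵀ = -B ∧ V * B = W := by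
  refine ⟨P * W - Wᵀ * Pᵀ - P * (W * Vᵀ) * Pᵀ, ?_, ?_⟩
  · have hVW : V * Wᵀ = -(W * Vᵀ) := eq_neg_of_add_eq_zero_right hW
    simp only [transpose_sub, transpose_mul, transpose_transpose, hVW]
    simp only [Matrix.mul_neg, Matrix.neg_mul, Matrix.mul_assoc]
    abel
  · calc V * (P * W - Wᵀ * Pᵀ - P * (W * Vᵀ) * Pᵀ)
        = V * P * W - (W * Vᵀ + V * Wᵀ) * Pᵀ - V * P * (W * Vᵀ) * Pᵀ + W * Vᵀ * Pᵀ := by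
          simp only [Matrix.mul_sub, Matrix.add_mul, Matrix.mul_assoc]; abel
      _ = W := by rw [hP, hW]; simp

theorem IsSymm.eq_zero_of_dotProduct_mulVec_eq_zero {ι : Type*} {q : ι → n → ℝ}
    (hspan : ∀ X : Matrix n n ℝ, X.IsSymm →
      X ∈ Submodule.span ℝ (Set.range fun i => vecMulVec (q i) (q i)))
    {M : Matrix n n ℝ} (hM : M.IsSymm) (h : ∀ i, q i ⬝ᵥ M *ᵥ q i = 0) : M = 0 := by
  let φ := traceLinearMap n ℝ ℝ ∘ₗ LinearMap.mulLeft ℝ M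
  have hker : Submodule.span ℝ (Set.range fun i => vecMulVec (q i) (q i)) ≤ LinearMap.ker φ :=
    Submodule.span_le.mpr <| Set.range_subset_iff.mpr fun i => by
      simp [φ, mul_vecMulVec, dotProduct_comm, h i]
  have hMM : (M * M).trace = 0 := hker (hspan M hM)
  rwa [← trace_conjTranspose_mul_self_eq_zero_iff, conjTranspose_eq_transpose_of_trivial, hM.eq]

end

end Matrix

theorem dual_slack_kernel_general {n r : ℕ}
    (A : Matrix (Fin n) (Fin n) ℝ)
    (σ : Matrix (Fin n) (Fin r) ℝ)
    (Λ : Matrix (Fin n) (Fin n) ℝ)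
    (hpsd : (Λ - A).PosSemidef) (hzero : (Λ - A) * σ = 0)
    (hsc : LinearMap.ker (Λ - A).mulVecLin = LinearMap.range σ.mulVecLin)
    (Q₁ : Matrix (Fin n) (Fin σ.rank) ℝ) (hQ : Q₁ᵀ * Q₁ = 1)
    (hQcol : LinearMap.range Q₁.mulVecLin = LinearMap.range σ.mulVecLin)
    (hspan : ∀ X : Matrix (Fin σ.rank) (Fin σ.rank) ℝ, X.IsSymm →
      X ∈ Submodule.span ℝ (Set.range fun i : Fin n => vecMulVec (Q₁ i) (Q₁ i)))
    (u : Matrix (Fin n) (Fin r) ℝ) (hu : ∀ i, ∑ k, u i k * σ i k = 0) :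
    Matrix.trace (uᵀ * (Λ - A) * u) = 0 ↔
      ∃ B : Matrix (Fin r) (Fin r) ℝ, Bᵀ = -B ∧ u = σ * B := by
  constructor
  · intro h
    have hSu : (Λ - A) * u = 0 := hpsd.mul_eq_zero_of_trace_conjTranspose_mul_mul_eq_zero
      (by rwa [conjTranspose_eq_transpose_of_trivial])
    have hu_range : LinearMap.range u.mulVecLin ≤ LinearMap.range Q₁.mulVecLin :=
      hQcol ▸ hsc ▸ range_mulVecLin_le_ker_of_mul_eq_zero hSu
    have hσR := mul_transpose_mul_eq_self_of_range_le hQ hQcol.ge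
    have huW := mul_transpose_mul_eq_self_of_range_le hQ hu_range
    set R := Q₁ᵀ * σ
    set W := Q₁ᵀ * u
    have hskew : W * Rᵀ + R * Wᵀ = 0 := by
      refine IsSymm.eq_zero_of_dotProduct_mulVec_eq_zero hspan ?_ fun i => ?_
      · simp only [IsSymm, transpose_add, transpose_mul, transpose_transpose, add_comm]
      · rw [dotProduct_mulVec_mul_transpose_add, ← mul_apply_eq_vecMul, ← mul_apply_eq_vecMul,
          huW, hσR]
        exact mul_eq_zero_of_right 2 (hu i)
    obtain ⟨P, hP⟩ := exists_transpose_mul_mul_eq_one_of_range_le hQ hQcol.le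
    obtain ⟨B, hB, hRB⟩ := exists_skew_mul_eq hP hskew
    exact ⟨B, hB, by rw [← huW, ← hRB, ← Matrix.mul_assoc, hσR]⟩
  · rintro ⟨B, -, rfl⟩
    rw [Matrix.mul_assoc, ← Matrix.mul_assoc (Λ - A), hzero, Matrix.zero_mul, Matrix.mul_zero,
      trace_zero]

/-- kernel of the dual slack quadratic form on the tangent space.
Under strict complementarity and dual nondegeneracy, for tangent `u` one has
`⟨u, (Λ − A)u⟩_F = 0` iff `u ∈ V_σ = {σB : Bᵀ = −B}`. -/
theorem dual_slack_kernel {n r : ℕ} (hn : 0 < n) (hr : 0 < r)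
    (A : Matrix (Fin n) (Fin n) ℝ) (hA : A.IsSymm) (hdiag : ∀ i, A i i = 0)
    (σ : Matrix (Fin n) (Fin r) ℝ) (hσ : ∀ i, ∑ k, σ i k ^ 2 = 1)
    (Λ : Matrix (Fin n) (Fin n) ℝ) (hΛ : Λ.IsDiag)
    (hpsd : (Λ - A).PosSemidef) (hzero : (Λ - A) * σ = 0)
    (hsc : LinearMap.ker (Λ - A).mulVecLin = LinearMap.range σ.mulVecLin)
    (Q₁ : Matrix (Fin n) (Fin σ.rank) ℝ) (hQ : Q₁ᵀ * Q₁ = 1)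
    (hQcol : LinearMap.range Q₁.mulVecLin = LinearMap.range σ.mulVecLin)
    (hspan : ∀ X : Matrix (Fin σ.rank) (Fin σ.rank) ℝ, X.IsSymm →
      X ∈ Submodule.span ℝ (Set.range fun i : Fin n => vecMulVec (Q₁ i) (Q₁ i)))
    (u : Matrix (Fin n) (Fin r) ℝ) (hu : ∀ i, ∑ k, u i k * σ i k = 0) :
    Matrix.trace (uᵀ * (Λ - A) * u) = 0 ↔
      ∃ B : Matrix (Fin r) (Fin r) ℝ, Bᵀ = -B ∧ u = σ * B :=
  dual_slack_kernel_general A σ Λ hpsd hzero hsc Q₁ hQ hQcol hspan u hu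
end
end
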